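/- arXiv:2504.08769 — 2 statements merged into one kernel-verified Lean document; each statement's English description precedes it below -/
import Mathlib

section
/- Under the assumptions of the implicit event-time theorem, the event map F(x₀) = Φ(t*(x₀); x₀) is continuously differentiable near x̄₀ and its Jacobian is DF(x̄₀) = (I − f(x_e) ⊗ ∇e(x_e) / (∇e(x_e) · f(x_e))) · D_{x₀}Φ(T; x̄₀), where x_e = F(x̄₀). -/
/-!
Differentiating `e (F x₀) = 0` with `F x₀ = Φ (t* x₀, x₀)` gives
`DF = Dt* ⊗ f(x_e) + D_{x₀}Φ` and `∇e(x_e) · DF = 0`. Transversality lets one solve the second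
equation for `Dt*`, and substituting into the first yields the projection formula.
-/

open Filter

section

variable {𝕜 : Type*} [NontriviallyNormedField 𝕜]
  {E : Type*} [NormedAddCommGroup E] [NormedSpace 𝕜 E]
  {F : Type*} [NormedAddCommGroup F] [NormedSpace 𝕜 F]

theorem HasFDerivAt.comp_graph {Ψ : 𝕜 × E → F} {Ψ' : 𝕜 × E →L[𝕜] F} {τ : E → 𝕜}
    {τ' : E →L[𝕜] 𝕜} {B : E →L[𝕜] F} {w : F} {x : E}
    (hΨ : HasFDerivAt Ψ Ψ' (τ x, x))
    (htime : HasDerivAt (fun s => Ψ (s, x)) w (τ x))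
    (hspace : HasFDerivAt (fun y => Ψ (τ x, y)) B x)
    (hτ : HasFDerivAt τ τ' x) :
    HasFDerivAt (fun y => Ψ (τ y, y)) (τ'.smulRight w + B) x := by
  have hw : Ψ' (1, 0) = w :=
    (hΨ.comp_hasDerivAt (τ x) ((hasDerivAt_id _).prodMk (hasDerivAt_const _ x))).unique htime
  have hB : Ψ'.comp (ContinuousLinearMap.inr 𝕜 𝕜 E) = B :=
    (hΨ.comp x ((hasFDerivAt_const (τ x) x).prodMk (hasFDerivAt_id x))).unique hspace
  refine (hΨ.comp (f := fun y => (τ y, y)) x (hτ.prodMk (hasFDerivAt_id x))).congr_fderiv ?_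
  ext v
  have hsplit : (τ' v, v) = τ' v • ((1 : 𝕜), (0 : E)) + ((0 : 𝕜), v) := by simp
  rw [ContinuousLinearMap.comp_apply, ContinuousLinearMap.prod_apply,
    ContinuousLinearMap.id_apply, hsplit, map_add, map_smul, hw, ← hB]
  simp

theorem smul_add_eq_sub_div_smul_of_map_eq_zero {φ : F →L[𝕜] 𝕜} {w u : F} {c : 𝕜}
    (hw : φ w ≠ 0) (h : φ (c • w + u) = 0) :
    c • w + u = u - (φ u / φ w) • w := by
  have hc : c = -(φ u / φ w) := by
    rw [map_add, map_smul, smul_eq_mul] at h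
    field_simp
    linear_combination h
  rw [hc, neg_smul]
  abel

end

theorem event_map_jacobian_general {n : ℕ}
    (f : (Fin n → ℝ) → (Fin n → ℝ))
    (Φ : ℝ → (Fin n → ℝ) → (Fin n → ℝ))
    (hΦ : ContDiff ℝ 1 (fun p : ℝ × (Fin n → ℝ) => Φ p.1 p.2))
    (hflow : ∀ t x₀, HasDerivAt (fun s => Φ s x₀) (f (Φ t x₀)) t)
    (e : (Fin n → ℝ) → ℝ) (he : ContDiff ℝ 1 e)
    (xbar₀ : Fin n → ℝ) (T : ℝ)
    (htrans : fderiv ℝ e (Φ T xbar₀) (f (Φ T xbar₀)) ≠ 0)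
    (U : Set (Fin n → ℝ)) (hU : U ∈ nhds xbar₀)
    (tstar : (Fin n → ℝ) → ℝ) (hts : ContDiffOn ℝ 1 tstar U)
    (htT : tstar xbar₀ = T)
    (hte : ∀ x₀ ∈ U, e (Φ (tstar x₀) x₀) = 0)
    (F : (Fin n → ℝ) → (Fin n → ℝ)) (hF : ∀ x₀, F x₀ = Φ (tstar x₀) x₀) :
    (∃ V ∈ nhds xbar₀, ContDiffOn ℝ 1 F V) ∧
    ∀ v : Fin n → ℝ,
      fderiv ℝ F xbar₀ v =
        fderiv ℝ (fun y => Φ T y) xbar₀ v -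
          ((fderiv ℝ e (Φ T xbar₀) (fderiv ℝ (fun y => Φ T y) xbar₀ v)) /
            (fderiv ℝ e (Φ T xbar₀) (f (Φ T xbar₀)))) • f (Φ T xbar₀) := by
  obtain rfl : F = fun x₀ => Φ (tstar x₀) x₀ := funext hF
  refine ⟨⟨U, hU, hΦ.comp_contDiffOn (hts.prodMk contDiffOn_id)⟩, fun v => ?_⟩
  subst htT
  have hΦd := (hΦ.differentiable one_ne_zero).differentiableAt (x := (tstar xbar₀, xbar₀))
  have hspace : DifferentiableAt ℝ (fun y => Φ (tstar xbar₀) y) xbar₀ :=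
    hΦd.comp xbar₀ ((differentiableAt_const _).prodMk differentiableAt_id)
  have htstar : DifferentiableAt ℝ tstar xbar₀ :=
    (hts.differentiableOn one_ne_zero xbar₀ (mem_of_mem_nhds hU)).differentiableAt hU
  have hDF := hΦd.hasFDerivAt.comp_graph (hflow _ xbar₀) hspace.hasFDerivAt htstar.hasFDerivAt
  have he_DF : (fderiv ℝ e (Φ (tstar xbar₀) xbar₀)).comp
      ((fderiv ℝ tstar xbar₀).smulRight (f (Φ (tstar xbar₀) xbar₀)) +
        fderiv ℝ (fun y => Φ (tstar xbar₀) y) xbar₀) = 0 :=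
    (((he.differentiable one_ne_zero).differentiableAt.hasFDerivAt).comp xbar₀ hDF).unique
      ((hasFDerivAt_const 0 xbar₀).congr_of_eventuallyEq (eventually_of_mem hU hte))
  rw [hDF.fderiv]
  exact smul_add_eq_sub_div_smul_of_map_eq_zero htrans (DFunLike.congr_fun he_DF v)

/-- The event map `F(x₀) = Φ(t*(x₀); x₀)` is C¹ near `x̄₀` and its Jacobian is
`DF(x̄₀) = (I − f(x_e) ⊗ ∇e(x_e)/(∇e(x_e)·f(x_e))) · D_{x₀}Φ(T; x̄₀)`,
where `x_e = F(x̄₀) = Φ(T; x̄₀)`. -/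
theorem event_map_jacobian {n : ℕ}
    (f : (Fin n → ℝ) → (Fin n → ℝ)) (hf : ContDiff ℝ 1 f)
    (Φ : ℝ → (Fin n → ℝ) → (Fin n → ℝ))
    (hΦ : ContDiff ℝ 1 (fun p : ℝ × (Fin n → ℝ) => Φ p.1 p.2))
    (hΦ0 : ∀ x₀, Φ 0 x₀ = x₀)
    (hflow : ∀ t x₀, HasDerivAt (fun s => Φ s x₀) (f (Φ t x₀)) t)
    (e : (Fin n → ℝ) → ℝ) (he : ContDiff ℝ 1 e)
    (xbar₀ : Fin n → ℝ) (T : ℝ)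
    (hev : e (Φ T xbar₀) = 0)
    (htrans : fderiv ℝ e (Φ T xbar₀) (f (Φ T xbar₀)) ≠ 0)
    (U : Set (Fin n → ℝ)) (hU : U ∈ nhds xbar₀)
    (tstar : (Fin n → ℝ) → ℝ) (hts : ContDiffOn ℝ 1 tstar U)
    (htT : tstar xbar₀ = T)
    (hte : ∀ x₀ ∈ U, e (Φ (tstar x₀) x₀) = 0)
    (F : (Fin n → ℝ) → (Fin n → ℝ)) (hF : ∀ x₀, F x₀ = Φ (tstar x₀) x₀) :
    (∃ V ∈ nhds xbar₀, ContDiffOn ℝ 1 F V) ∧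
    ∀ v : Fin n → ℝ,
      fderiv ℝ F xbar₀ v =
        fderiv ℝ (fun y => Φ T y) xbar₀ v -
          ((fderiv ℝ e (Φ T xbar₀) (fderiv ℝ (fun y => Φ T y) xbar₀ v)) /
            (fderiv ℝ e (Φ T xbar₀) (f (Φ T xbar₀)))) • f (Φ T xbar₀) :=
  event_map_jacobian_general f Φ hΦ hflow e he xbar₀ T htrans U hU tstar hts htT hte F hF
end

section
/- In the adjoint method, the sensitivity λ(0) obtained by integrating λ̇ = −a(t)ᵀ ∇_θ f(x(t), θ, t) backward from λ(t_f) = 0, where a solves the adjoint equation ȧ = −(∇ₓf)ᵀ a with a(t_f) = ∇ₓ L(x(t_f)), equals the gradient dL(x(t_f; θ))/dθ of the terminal loss with respect to the parameters θ, for a C¹ vector field f(x, θ, t) linear-in-parameter case n = 1 and scalar θ. -/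
/-!
Let `X = x θ₀`. On a compact tube around the trajectory `t ↦ (X t, θ₀, t)`, `t ∈ [0, tf]`, the
`C¹` field `f` is Lipschitz and uniformly differentiable. Grönwall's inequality, combined with a
continuity argument that keeps `x θ` inside the tube, gives `|x θ t - X t| = O(θ - θ₀)` uniformly
in `t`, hence the linearization error
`R θ t = f (x θ t) θ t - f (X t) θ₀ t - A t (x θ t - X t) - B t (θ - θ₀)` is `o(θ - θ₀)`
uniformly in `t`, where `A t` and `B t` are the partial derivatives of `f` in the state and in the
parameter at `(X t, θ₀, t)`. Along the adjoint equations, `a t (x θ t - X t) + λ t (θ - θ₀)` has time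
derivative `a t R θ t`, so comparing `t = tf` with `t = 0` gives
`a tf (x θ tf - X tf) = (λ 0 - λ tf)(θ - θ₀) + o(θ - θ₀)`. With `a tf = L' (X tf)` and
`λ tf = 0`, this is the chain rule for `L`.
-/

open Set Filter Topology Asymptotics Metric

theorem norm_triple_sub_triple (u v p q t : ℝ) :
    ‖((u, p, t) : ℝ × ℝ × ℝ) - (v, q, t)‖ = max |u - v| |p - q| := by
  simp [Prod.norm_def]

theorem fderiv_uncurry_apply_eq_deriv_add_deriv {f : ℝ → ℝ → ℝ → ℝ} {u p t : ℝ}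
    (hf : DifferentiableAt ℝ (fun q : ℝ × ℝ × ℝ => f q.1 q.2.1 q.2.2) (u, p, t)) (du dp : ℝ) :
    fderiv ℝ (fun q : ℝ × ℝ × ℝ => f q.1 q.2.1 q.2.2) (u, p, t) (du, dp, 0) =
      du * deriv (fun v => f v p t) u + dp * deriv (fun v => f u v t) p := by
  have hu : HasDerivAt (fun v => f v p t)
      (fderiv ℝ (fun q : ℝ × ℝ × ℝ => f q.1 q.2.1 q.2.2) (u, p, t) (1, 0, 0)) u :=
    hf.hasFDerivAt.comp_hasDerivAt_of_eq u
      ((hasDerivAt_id' u).prodMk ((hasDerivAt_const u p).prodMk (hasDerivAt_const u t))) rfl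
  have hp : HasDerivAt (fun v => f u v t)
      (fderiv ℝ (fun q : ℝ × ℝ × ℝ => f q.1 q.2.1 q.2.2) (u, p, t) (0, 1, 0)) p :=
    hf.hasFDerivAt.comp_hasDerivAt_of_eq p
      ((hasDerivAt_const p u).prodMk ((hasDerivAt_id' p).prodMk (hasDerivAt_const p t))) rfl
  rw [hu.deriv, hp.deriv, ← smul_eq_mul, ← smul_eq_mul, ← map_smul, ← map_smul, ← map_add]
  simp

section UniformTaylor

variable {E F : Type*} [NormedAddCommGroup E] [NormedSpace ℝ E] [ProperSpace E]
  [NormedAddCommGroup F] [NormedSpace ℝ F] {f : E → F} {K : Set E}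

theorem ContDiff.exists_norm_sub_sub_fderiv_le (hf : ContDiff ℝ 1 f) (hK : IsCompact K)
    {ε : ℝ} (hε : 0 < ε) :
    ∃ ρ > 0, ∀ z ∈ K, ∀ w, ‖w - z‖ < ρ → ‖f w - f z - fderiv ℝ f z (w - z)‖ ≤ ε * ‖w - z‖ := by
  obtain ⟨δ, hδ, hunif⟩ := Metric.uniformContinuousOn_iff.1
    ((hK.cthickening (r := 1)).uniformContinuousOn_of_continuous
      (hf.continuous_fderiv one_ne_zero).continuousOn) ε hε
  refine ⟨min δ 1, by positivity, fun z hz w hw => ?_⟩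
  have hclose : ∀ y ∈ ball z (min δ 1), ‖fderiv ℝ f y - fderiv ℝ f z‖ ≤ ε := fun y hy => by
    rw [← dist_eq_norm]
    refine (hunif y (mem_cthickening_of_dist_le y z 1 K hz ?_) z
      (self_subset_cthickening K hz) (hy.trans_le (min_le_left _ _))).le
    exact (mem_ball.1 hy).le.trans (min_le_right _ _)
  exact (convex_ball z _).norm_image_sub_le_of_norm_fderiv_le'
    (fun y _ => hf.differentiable one_ne_zero y) hclose (mem_ball_self (by positivity))
    (by rwa [mem_ball, dist_eq_norm])

theorem ContDiff.exists_norm_sub_le_mul (hf : ContDiff ℝ 1 f) (hK : IsCompact K) :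
    ∃ M, 0 ≤ M ∧ ∃ ρ > 0, ∀ z ∈ K, ∀ w, ‖w - z‖ < ρ → ‖f w - f z‖ ≤ M * ‖w - z‖ := by
  obtain ⟨ρ, hρ, htaylor⟩ := hf.exists_norm_sub_sub_fderiv_le hK one_pos
  obtain ⟨N, hN⟩ := hK.exists_bound_of_continuousOn (hf.continuous_fderiv one_ne_zero).continuousOn
  refine ⟨1 + max N 0, by positivity, ρ, hρ, fun z hz w hw => ?_⟩
  calc ‖f w - f z‖ = ‖(f w - f z - fderiv ℝ f z (w - z)) + fderiv ℝ f z (w - z)‖ := by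
        rw [sub_add_cancel]
    _ ≤ 1 * ‖w - z‖ + max N 0 * ‖w - z‖ :=
        norm_add_le_of_le (htaylor z hz w hw)
          ((fderiv ℝ f z).le_of_opNorm_le ((hN z hz).trans (le_max_left _ _)) _)
    _ = (1 + max N 0) * ‖w - z‖ := by ring

end UniformTaylor

theorem norm_le_mul_gronwallBound_of_eq_zero {E : Type*} [NormedAddCommGroup E]
    [NormedSpace ℝ E] {g g' : ℝ → E} {K ε a b : ℝ} (hK : 0 ≤ K) (hε : 0 ≤ ε)
    (hg : ContinuousOn g (Icc a b)) (hg' : ∀ t ∈ Ico a b, HasDerivWithinAt g (g' t) (Ici t) t)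
    (ha : g a = 0) (bound : ∀ t ∈ Ico a b, ‖g' t‖ ≤ K * ‖g t‖ + ε) :
    ∀ t ∈ Icc a b, ‖g t‖ ≤ ε * gronwallBound 0 K 1 (b - a) := fun t ht =>
  calc ‖g t‖ ≤ gronwallBound 0 K ε (t - a) :=
        norm_le_gronwallBound_of_norm_deriv_right_le hg hg' (by simp [ha]) bound t ht
    _ ≤ gronwallBound 0 K ε (b - a) := gronwallBound_mono le_rfl hε hK (by linarith [ht.2])
    _ = ε * gronwallBound 0 K 1 (b - a) := by unfold gronwallBound; split_ifs <;> ring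

theorem forall_lt_of_forall_Ico_lt {g : ℝ → ℝ} {a b r : ℝ} (hg : ContinuousOn g (Icc a b))
    (h : ∀ t ∈ Icc a b, (∀ u ∈ Ico a t, g u < r) → g t < r) : ∀ t ∈ Icc a b, g t < r := by
  by_contra! hne
  obtain ⟨t, ht, hrt⟩ := hne
  set S := Icc a b ∩ g ⁻¹' Ici r
  have hbdd : BddBelow S := ⟨a, fun u hu => hu.1.1⟩
  have hmem : sInf S ∈ S :=
    (hg.preimage_isClosed_of_isClosed isClosed_Icc isClosed_Ici).csInf_mem ⟨t, ht, hrt⟩ hbdd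
  refine not_lt.2 hmem.2 (h _ hmem.1 fun u hu => not_le.1 fun hru => ?_)
  exact hu.2.not_ge (csInf_le hbdd ⟨⟨hu.1, hu.2.le.trans hmem.1.2⟩, hru⟩)

theorem exists_abs_le_mul_of_hasDerivAt_of_le {e e' : ℝ → ℝ → ℝ} {θ₀ M r a b : ℝ}
    (hab : a ≤ b) (hM : 0 ≤ M) (hr : 0 < r) (he : ∀ θ t, HasDerivAt (e θ) (e' θ t) t)
    (he0 : ∀ θ, e θ a = 0)
    (hbound : ∀ θ, |θ - θ₀| < r → ∀ t ∈ Icc a b, |e θ t| < r →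
      |e' θ t| ≤ M * (|e θ t| + |θ - θ₀|)) :
    ∃ C, 0 ≤ C ∧ ∀ᶠ θ in 𝓝 θ₀, ∀ t ∈ Icc a b, |e θ t| ≤ C * |θ - θ₀| := by
  set G := gronwallBound 0 M 1 (b - a)
  have hG : 0 ≤ G := by
    simpa [gronwallBound_x0] using gronwallBound_mono le_rfl zero_le_one hM (sub_nonneg.2 hab)
  refine ⟨M * G, by positivity, ?_⟩
  have hδ : 0 < r / (M * G + 1) := by positivity
  filter_upwards [ball_mem_nhds θ₀ hδ] with θ hθ
  rw [mem_ball, Real.dist_eq, lt_div_iff₀ (by positivity)] at hθ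
  have hθr : |θ - θ₀| < r := by nlinarith [abs_nonneg (θ - θ₀), mul_nonneg hM hG]
  have hcont : Continuous (e θ) := continuous_iff_continuousAt.2 fun t => (he θ t).continuousAt
  have hgronwall : ∀ T ∈ Icc a b, (∀ u ∈ Ico a T, |e θ u| < r) →
      ∀ t ∈ Icc a T, |e θ t| ≤ M * G * |θ - θ₀| := by
    intro T hT htube t ht
    have hbd := norm_le_mul_gronwallBound_of_eq_zero hM (by positivity : 0 ≤ M * |θ - θ₀|)
      hcont.continuousOn (fun u _ => (he θ u).hasDerivWithinAt) (he0 θ)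
      (fun u hu => by
        simpa [mul_add] using hbound θ hθr u ⟨hu.1, hu.2.le.trans hT.2⟩ (htube u hu)) t ht
    calc |e θ t| ≤ M * |θ - θ₀| * gronwallBound 0 M 1 (T - a) := hbd
      _ ≤ M * |θ - θ₀| * G := by
        gcongr; exact gronwallBound_mono le_rfl zero_le_one hM (by linarith [hT.2])
      _ = M * G * |θ - θ₀| := by ring
  have htube : ∀ t ∈ Icc a b, |e θ t| < r :=
    forall_lt_of_forall_Ico_lt (hcont.abs.continuousOn) fun T hT htube =>
      (hgronwall T hT htube T (right_mem_Icc.2 hT.1)).trans_lt (by nlinarith [abs_nonneg (θ - θ₀)])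
  exact hgronwall b (right_mem_Icc.2 hab) (fun u hu => htube u (Ico_subset_Icc_self hu))

theorem exists_abs_le_mul_of_hasDerivAt {e e' : ℝ → ℝ → ℝ} {θ₀ M r a b : ℝ}
    (hM : 0 ≤ M) (hr : 0 < r) (he : ∀ θ t, HasDerivAt (e θ) (e' θ t) t)
    (he0 : ∀ θ, e θ a = 0)
    (hbound : ∀ θ, |θ - θ₀| < r → ∀ t ∈ uIcc a b, |e θ t| < r →
      |e' θ t| ≤ M * (|e θ t| + |θ - θ₀|)) :
    ∃ C, 0 ≤ C ∧ ∀ᶠ θ in 𝓝 θ₀, ∀ t ∈ uIcc a b, |e θ t| ≤ C * |θ - θ₀| := by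
  rcases le_total a b with hab | hba
  · rw [uIcc_of_le hab] at hbound ⊢
    exact exists_abs_le_mul_of_hasDerivAt_of_le hab hM hr he he0 hbound
  · rw [uIcc_of_ge hba] at hbound ⊢
    -- reverse time to run Grönwall forward from `-a` to `-b`
    obtain ⟨C, hC, hev⟩ := exists_abs_le_mul_of_hasDerivAt_of_le (e := fun θ t => e θ (-t))
      (e' := fun θ t => -e' θ (-t)) (neg_le_neg hba) hM hr
      (fun θ t => ((he θ (-t)).comp t (hasDerivAt_neg t)).congr_deriv (mul_neg_one _))
      (by simpa using he0)
      (fun θ hθ t ht het => by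
        simpa using hbound θ hθ (-t) ⟨by linarith [ht.2], by linarith [ht.1]⟩ het)
    refine ⟨C, hC, hev.mono fun θ h t ht => ?_⟩
    simpa using h (-t) ⟨by linarith [ht.2], by linarith [ht.1]⟩

theorem HasDerivAt.comp_of_isBigO {𝕜 : Type*} [NontriviallyNormedField 𝕜] {L h : 𝕜 → 𝕜}
    {L' d x : 𝕜} (hL : HasDerivAt L L' (h x))
    (hh : (fun y => h y - h x) =O[𝓝 x] fun y => y - x)
    (hd : HasDerivAt (fun y => L' * h y) d x) : HasDerivAt (fun y => L (h y)) d x := by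
  have htendsto : Tendsto h (𝓝 x) (𝓝 (h x)) :=
    tendsto_sub_nhds_zero_iff.1 (hh.trans_tendsto (tendsto_sub_nhds_zero_iff.2 tendsto_id))
  have hLo := ((hasDerivAt_iff_isLittleO.1 hL).comp_tendsto htendsto).trans_isBigO hh
  rw [hasDerivAt_iff_isLittleO] at hd ⊢
  refine (hLo.add hd).congr_left fun y => ?_
  simp only [Function.comp_apply, smul_eq_mul]
  ring

section ParametricODE

variable {f : ℝ → ℝ → ℝ → ℝ} {x : ℝ → ℝ → ℝ} {x₀ θ₀ : ℝ}

theorem isCompact_image_trajectory (hx : ∀ θ t, HasDerivAt (fun s => x θ s) (f (x θ t) θ t) t)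
    (tf : ℝ) : IsCompact ((fun t => ((x θ₀ t, θ₀, t) : ℝ × ℝ × ℝ)) '' uIcc 0 tf) := by
  have hX : Continuous (x θ₀) := continuous_iff_continuousAt.2 fun t => (hx θ₀ t).continuousAt
  exact isCompact_uIcc.image (by fun_prop)

theorem exists_abs_sub_le_mul_of_ode
    (hf : ContDiff ℝ 1 (fun p : ℝ × ℝ × ℝ => f p.1 p.2.1 p.2.2)) (hx0 : ∀ θ, x θ 0 = x₀)
    (hx : ∀ θ t, HasDerivAt (fun s => x θ s) (f (x θ t) θ t) t) (tf : ℝ) :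
    ∃ C, 0 ≤ C ∧ ∀ᶠ θ in 𝓝 θ₀, ∀ t ∈ uIcc 0 tf, |x θ t - x θ₀ t| ≤ C * |θ - θ₀| := by
  obtain ⟨M, hM, ρ, hρ, hlip⟩ := hf.exists_norm_sub_le_mul (isCompact_image_trajectory hx tf)
  refine exists_abs_le_mul_of_hasDerivAt hM hρ (fun θ t => (hx θ t).sub (hx θ₀ t))
    (fun θ => by simp [hx0]) fun θ hθ t ht he => ?_
  have h := hlip _ (mem_image_of_mem _ ht) (x θ t, θ, t)
    (by rw [norm_triple_sub_triple]; exact max_lt he hθ)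
  rw [norm_triple_sub_triple] at h
  exact h.trans (by gcongr; exact max_le_add_of_nonneg (abs_nonneg _) (abs_nonneg _))

theorem eventually_abs_linearization_error_le
    (hf : ContDiff ℝ 1 (fun p : ℝ × ℝ × ℝ => f p.1 p.2.1 p.2.2)) (hx0 : ∀ θ, x θ 0 = x₀)
    (hx : ∀ θ t, HasDerivAt (fun s => x θ s) (f (x θ t) θ t) t) (tf : ℝ) {ε : ℝ} (hε : 0 < ε) :
    ∀ᶠ θ in 𝓝 θ₀, ∀ t ∈ uIcc 0 tf,
      |f (x θ t) θ t - f (x θ₀ t) θ₀ t - ((x θ t - x θ₀ t) * deriv (fun u => f u θ₀ t) (x θ₀ t)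
        + (θ - θ₀) * deriv (fun θ => f (x θ₀ t) θ t) θ₀)| ≤ ε * |θ - θ₀| := by
  obtain ⟨C, hC, hlip⟩ := exists_abs_sub_le_mul_of_ode (θ₀ := θ₀) hf hx0 hx tf
  obtain ⟨ρ, hρ, htaylor⟩ := hf.exists_norm_sub_sub_fderiv_le
    (isCompact_image_trajectory (θ₀ := θ₀) hx tf) (by positivity : 0 < ε / (C + 1))
  filter_upwards [hlip, ball_mem_nhds θ₀ (by positivity : 0 < ρ / (C + 1))] with θ hθ hball t ht
  rw [mem_ball, Real.dist_eq, lt_div_iff₀ (by positivity)] at hball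
  have hmax : max |x θ t - x θ₀ t| |θ - θ₀| ≤ (C + 1) * |θ - θ₀| :=
    max_le (by linarith [hθ t ht, abs_nonneg (θ - θ₀)]) (by nlinarith [abs_nonneg (θ - θ₀)])
  have h := htaylor _ (mem_image_of_mem _ ht) (x θ t, θ, t)
    (by rw [norm_triple_sub_triple]; linarith)
  rw [norm_triple_sub_triple] at h
  simp only [Prod.mk_sub_mk, sub_self, Real.norm_eq_abs,
    fderiv_uncurry_apply_eq_deriv_add_deriv (hf.differentiable one_ne_zero _)] at h
  calc _ ≤ ε / (C + 1) * max |x θ t - x θ₀ t| |θ - θ₀| := h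
    _ ≤ ε / (C + 1) * ((C + 1) * |θ - θ₀|) := by gcongr
    _ = ε * |θ - θ₀| := by field_simp

theorem hasDerivAt_adjoint_mul_ode_solution
    (hf : ContDiff ℝ 1 (fun p : ℝ × ℝ × ℝ => f p.1 p.2.1 p.2.2)) (hx0 : ∀ θ, x θ 0 = x₀)
    (hx : ∀ θ t, HasDerivAt (fun s => x θ s) (f (x θ t) θ t) t) {a lam : ℝ → ℝ}
    (ha : ∀ t, HasDerivAt a (-(deriv (fun u => f u θ₀ t) (x θ₀ t) * a t)) t)
    (hlam : ∀ t, HasDerivAt lam (-(a t * deriv (fun θ => f (x θ₀ t) θ t) θ₀)) t) (tf : ℝ) :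
    HasDerivAt (fun θ => a tf * x θ tf) (lam 0 - lam tf) θ₀ := by
  obtain ⟨Ma, hMa⟩ := (isCompact_uIcc (a := 0) (b := tf)).exists_bound_of_continuousOn
    (continuous_iff_continuousAt.2 fun t => (ha t).continuousAt).continuousOn
  have hMa0 : 0 ≤ Ma := (norm_nonneg _).trans (hMa 0 left_mem_uIcc)
  rw [hasDerivAt_iff_isLittleO, isLittleO_iff]
  intro c hc
  have hε : 0 < c / ((Ma + 1) * (|tf| + 1)) := by positivity
  filter_upwards [eventually_abs_linearization_error_le hf hx0 hx tf hε] with θ hθ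
  have hderiv : ∀ t, HasDerivAt (fun t => a t * (x θ t - x θ₀ t) + lam t * (θ - θ₀))
      (a t * (f (x θ t) θ t - f (x θ₀ t) θ₀ t - ((x θ t - x θ₀ t) *
        deriv (fun u => f u θ₀ t) (x θ₀ t) + (θ - θ₀) * deriv (fun θ => f (x θ₀ t) θ t) θ₀))) t :=
    fun t => (((ha t).mul ((hx θ t).sub (hx θ₀ t))).add ((hlam t).mul_const _)).congr_deriv
      (by simp only [Pi.sub_apply]; ring)
  have hmvt := (convex_uIcc 0 tf).norm_image_sub_le_of_norm_hasDerivWithin_le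
    (fun t _ => (hderiv t).hasDerivWithinAt)
    (fun t ht => by
      rw [Real.norm_eq_abs, abs_mul]
      exact mul_le_mul (hMa t ht) (hθ t ht) (abs_nonneg _) hMa0)
    left_mem_uIcc right_mem_uIcc
  simp only [hx0, sub_self, mul_zero, zero_add, sub_zero, Real.norm_eq_abs] at hmvt
  have hcoef : Ma * (c / ((Ma + 1) * (|tf| + 1))) * |tf| ≤ c := by
    rw [mul_comm Ma, mul_assoc, div_mul_eq_mul_div, div_le_iff₀ (by positivity)]
    nlinarith [abs_nonneg tf]
  calc ‖a tf * x θ tf - a tf * x θ₀ tf - (θ - θ₀) • (lam 0 - lam tf)‖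
      = |a tf * (x θ tf - x θ₀ tf) + lam tf * (θ - θ₀) - lam 0 * (θ - θ₀)| := by
        rw [Real.norm_eq_abs, smul_eq_mul]; ring_nf
    _ ≤ Ma * (c / ((Ma + 1) * (|tf| + 1)) * |θ - θ₀|) * |tf| := hmvt
    _ ≤ c * ‖θ - θ₀‖ := by
      rw [Real.norm_eq_abs]; nlinarith [abs_nonneg (θ - θ₀)]

end ParametricODE

/-- Correctness of the adjoint method for parameter gradients in the scalar case
(`n = 1`, one scalar parameter `θ`): the backward-integrated sensitivity `λ(0)`
equals the gradient of the terminal loss with respect to `θ`. -/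
theorem adjoint_method_parameter_gradient
    (f : ℝ → ℝ → ℝ → ℝ)
    (hf : ContDiff ℝ 1 (fun p : ℝ × ℝ × ℝ => f p.1 p.2.1 p.2.2))
    (L : ℝ → ℝ) (hL : ContDiff ℝ 1 L)
    (x₀ θ₀ tf : ℝ)
    (x : ℝ → ℝ → ℝ)
    (hx0 : ∀ θ, x θ 0 = x₀)
    (hx : ∀ θ t, HasDerivAt (fun s => x θ s) (f (x θ t) θ t) t)
    (a : ℝ → ℝ)
    (ha : ∀ t, HasDerivAt a (-(deriv (fun u => f u θ₀ t) (x θ₀ t) * a t)) t)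
    (haf : a tf = deriv L (x θ₀ tf))
    (lam : ℝ → ℝ)
    (hlam : ∀ t, HasDerivAt lam (-(a t * deriv (fun θ => f (x θ₀ t) θ t) θ₀)) t)
    (hlamf : lam tf = 0) :
    HasDerivAt (fun θ => L (x θ tf)) (lam 0) θ₀ := by
  obtain ⟨C, -, hC⟩ := exists_abs_sub_le_mul_of_ode (θ₀ := θ₀) hf hx0 hx tf
  have hbigO : (fun θ => x θ tf - x θ₀ tf) =O[𝓝 θ₀] fun θ => θ - θ₀ :=
    IsBigO.of_bound C (hC.mono fun θ h => by simpa using h tf right_mem_uIcc)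
  have hadj := hasDerivAt_adjoint_mul_ode_solution hf hx0 hx ha hlam tf
  rw [hlamf, sub_zero, haf] at hadj
  exact (hL.differentiable one_ne_zero _).hasDerivAt.comp_of_isBigO hbigO hadj
end
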